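/- arXiv:2512.10658 — 6 statements merged into one kernel-verified Lean document; each statement's English description precedes it below -/
import Mathlib

section
/- For every positive integer $n$, $\sum_{k \in \mathbb{Z}} (-1)^k p(n - \omega(k)) = 0$, where the sum is over all integers $k$ with $\omega(k) \le n$. -/
/-!
Proof idea: by Euler's pentagonal number theorem, `∏ᵢ (1 - Xⁱ)` is the series
`∑ₖ (-1)ᵏ X^ω(k)`, while `∑ₙ p(n) Xⁿ = ∏ᵢ 1/(1 - Xⁱ)`. Hence the product of the two series is `1`,
and its coefficient of `Xⁿ`, `n ≥ 1`, is the sum in the theorem.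
-/

/-- The partition function `p(n)`. -/
def p (n : ℕ) : ℕ := Fintype.card (Nat.Partition n)

/-- `p` extended to the integers by `0` on negative arguments. -/
def pZ (m : ℤ) : ℤ := if 0 ≤ m then p m.toNat else 0

/-- The pentagonal number `ω(k) = (3k² + k)/2`. -/
def pent (k : ℤ) : ℤ := (3 * k ^ 2 + k) / 2

open PowerSeries PowerSeries.WithPiTopology

theorem PowerSeries.mk_card_partition_mul_pentagonalSeries (R : Type*) [CommRing R] :
    (mk fun n ↦ (Fintype.card n.Partition : R)) * pentagonalSeries R = 1 := by
  let _ : TopologicalSpace R := ⊥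
  have _ : DiscreteTopology R := ⟨rfl⟩
  have hpart : HasProd (fun i ↦ ∑' j : ℕ, (X : R⟦X⟧) ^ ((i + 1) * j))
      (mk fun n ↦ (Fintype.card n.Partition : R)) := by
    simpa [Nat.Partition.restricted] using
      Nat.Partition.hasProd_powerSeriesMk_card_restricted R (fun _ ↦ True)
  have hgeom (i : ℕ) : (∑' j : ℕ, (X : R⟦X⟧) ^ ((i + 1) * j)) * (1 - X ^ (i + 1)) = 1 := by
    simp_rw [pow_mul]
    exact tsum_pow_mul_one_sub_of_constantCoeff_eq_zero (by simp)
  have hprod := hpart.mul (hasProd_one_sub_X_pow R)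
  simp only [hgeom] at hprod
  exact hprod.unique hasProd_one

theorem natCast_pentagonal_neg_eq_pent (k : ℤ) : (pentagonal (-k) : ℤ) = pent k := by
  have h : 3 * k ^ 2 + k = 2 * pentagonal (-k) := by
    rw [two_mul_natCast_pentagonal_neg]; ring
  rw [pent, h, Int.mul_ediv_cancel_left _ two_ne_zero]

theorem natAbs_le_pent (k : ℤ) : (k.natAbs : ℤ) ≤ pent k := by
  have h := two_mul_natCast_pentagonal_neg k
  rw [natCast_pentagonal_neg_eq_pent] at h
  rcases le_or_gt 0 k with hk | hk
  · rw [Int.natAbs_of_nonneg hk]; nlinarith [Int.le_self_sq k]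
  · rw [Int.ofNat_natAbs_of_nonpos hk.le]; nlinarith [Int.le_self_sq (-k)]

theorem pZ_natCast_sub_pent (n : ℕ) (k : ℤ) :
    pZ (n - pent k) = if pentagonal (-k) ≤ n then (p (n - pentagonal (-k)) : ℤ) else 0 := by
  rw [pZ, ← natCast_pentagonal_neg_eq_pent]
  split_ifs with h₁ h₂ h₂
  · rw [show ((n : ℤ) - pentagonal (-k)).toNat = n - pentagonal (-k) by omega]
  all_goals omega

theorem hasSum_neg_one_pow_mul_pZ_natCast_sub_pent (n : ℕ) :
    HasSum (fun k : ℤ ↦ (-1 : ℤ) ^ k.natAbs * pZ (n - pent k)) (if n = 0 then 1 else 0) := by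
  have h := (hasSum_pentagonalSeries ℤ).mul_right (mk fun n ↦ (Fintype.card n.Partition : ℤ))
  rw [mul_comm, mk_card_partition_mul_pentagonalSeries] at h
  have hcoeff := h.map (coeff n) (continuous_coeff ℤ n)
  -- Mathlib's `pentagonal k = k(3k - 1)/2` is `ω(-k)`.
  rw [← (Equiv.neg ℤ).hasSum_iff, coeff_one] at hcoeff
  convert hcoeff using 2 with k
  simp only [Function.comp_apply, Equiv.neg_apply]
  rw [mul_assoc, ← zsmul_eq_mul, map_zsmul, coeff_X_pow_mul', pZ_natCast_sub_pent,
    Int.negOnePow_neg, smul_eq_mul, ← Int.coe_negOnePow ℤ, Int.cast_id]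
  simp only [coeff_mk, p]

/-- Euler's recurrence: for every positive `n`,
`∑_k (-1)^k p(n - ω(k)) = 0`, the sum being over all integers `k` with `ω(k) ≤ n`
(equivalently, over `|k| ≤ n`, since the remaining terms vanish). -/
theorem euler_recurrence (n : ℕ) (hn : 1 ≤ n) :
    ∑ k ∈ Finset.Icc (-(n : ℤ)) (n : ℤ), (-1 : ℤ) ^ k.natAbs * pZ ((n : ℤ) - pent k) = 0 := by
  have hsum := hasSum_neg_one_pow_mul_pZ_natCast_sub_pent n
  rw [if_neg (by omega)] at hsum
  refine (hsum.unique (hasSum_sum_of_ne_finset_zero fun k hk ↦ ?_)).symm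
  have hlt : (n : ℤ) < pent k := by
    have := natAbs_le_pent k
    rw [Finset.mem_Icc] at hk
    omega
  rw [pZ, if_neg (by omega), mul_zero]
end

section
/- For all nonnegative integers $v$ and all $0 \le j \le v$, one has $\binom{v+1/2}{v-j}\binom{v-1/2}{j} = 2^{-2v}\binom{2v}{v}\binom{2v+1}{2j+1}$. -/
/-
The half-integer falling factorials `(n + 1/2)(n - 1/2)⋯(3/2) = (2n+1)! / (4ⁿ n!)` and
`(n - 1/2)(n - 3/2)⋯(1/2) = (2n)! / (4ⁿ n!)` telescope: the first `k` factors of either are the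
quotient of its values at `n` and `n - k`. So for `k ≤ n` both `rchoose (n ± 1/2) k` are explicit
quotients of factorials, and the identity becomes a rearrangement of factorials.
-/

/-- The generalized binomial coefficient `x(x-1)⋯(x-m+1)/m!` for real `x`. -/
noncomputable def rchoose (x : ℝ) (m : ℕ) : ℝ :=
  (∏ i ∈ Finset.range m, (x - i)) / (m.factorial : ℝ)

open Finset
open scoped Nat

lemma prod_range_sub_mul_prod_range_sub (x : ℝ) {k n : ℕ} (hk : k ≤ n) :
    (∏ i ∈ range k, (x - i)) * ∏ i ∈ range (n - k), (x - k - i) = ∏ i ∈ range n, (x - i) := by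
  obtain ⟨m, rfl⟩ := Nat.exists_eq_add_of_le hk
  rw [Nat.add_sub_cancel_left, prod_range_add]
  congr 1
  refine prod_congr rfl fun i _ => ?_
  push_cast
  ring

lemma prod_range_natCast_sub_half (n : ℕ) :
    ∏ i ∈ range n, ((n : ℝ) - 1/2 - i) = (2 * n)! / (4 ^ n * n !) := by
  induction n with
  | zero => simp
  | succ n ih =>
    rw [prod_range_succ', Nat.mul_succ, Nat.factorial_succ, Nat.factorial_succ,
      Nat.factorial_succ n]
    have hshift : ∀ i : ℕ, ((n + 1 : ℕ) : ℝ) - 1/2 - (i + 1 : ℕ) = n - 1/2 - i := fun i => by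
      push_cast; ring
    simp only [hshift, ih]
    field_simp
    push_cast
    ring

lemma prod_range_natCast_add_half (n : ℕ) :
    ∏ i ∈ range n, ((n : ℝ) + 1/2 - i) = (2 * n + 1)! / (4 ^ n * n !) := by
  induction n with
  | zero => simp
  | succ n ih =>
    rw [prod_range_succ', Nat.mul_succ, Nat.factorial_succ, Nat.factorial_succ,
      Nat.factorial_succ n]
    have hshift : ∀ i : ℕ, ((n + 1 : ℕ) : ℝ) + 1/2 - (i + 1 : ℕ) = n + 1/2 - i := fun i => by
      push_cast; ring
    simp only [hshift, ih]
    field_simp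
    push_cast
    ring

lemma rchoose_natCast_add_half {n k : ℕ} (hk : k ≤ n) :
    rchoose (n + 1/2) k = (2 * n + 1)! * (n - k)! / (4 ^ k * n ! * k ! * (2 * (n - k) + 1)!) := by
  have hsplit := prod_range_sub_mul_prod_range_sub ((n : ℝ) + 1/2) hk
  rw [show (n : ℝ) + 1/2 - k = ((n - k : ℕ) : ℝ) + 1/2 by push_cast [hk]; ring,
    prod_range_natCast_add_half, prod_range_natCast_add_half,
    ← pow_sub_mul_pow (4 : ℝ) hk] at hsplit
  rw [rchoose]
  generalize ∏ i ∈ range k, ((n : ℝ) + 1/2 - i) = P at hsplit ⊢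
  field_simp at hsplit ⊢
  linear_combination hsplit

lemma rchoose_natCast_sub_half {n k : ℕ} (hk : k ≤ n) :
    rchoose (n - 1/2) k = (2 * n)! * (n - k)! / (4 ^ k * n ! * k ! * (2 * (n - k))!) := by
  have hsplit := prod_range_sub_mul_prod_range_sub ((n : ℝ) - 1/2) hk
  rw [show (n : ℝ) - 1/2 - k = ((n - k : ℕ) : ℝ) - 1/2 by push_cast [hk]; ring,
    prod_range_natCast_sub_half, prod_range_natCast_sub_half,
    ← pow_sub_mul_pow (4 : ℝ) hk] at hsplit
  rw [rchoose]
  generalize ∏ i ∈ range k, ((n : ℝ) - 1/2 - i) = P at hsplit ⊢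
  field_simp at hsplit ⊢
  linear_combination hsplit

theorem binomial_identity (v : ℕ) (j : ℕ) (hj : j ≤ v) :
    rchoose ((v : ℝ) + 1/2) (v - j) * rchoose ((v : ℝ) - 1/2) j =
      2 ^ (-(2 * v : ℤ)) * ((2 * v).choose v : ℝ) * ((2 * v + 1).choose (2 * j + 1) : ℝ) := by
  have hpow : (2 : ℝ) ^ (-(2 * v : ℤ)) = (4 ^ v)⁻¹ := by
    rw [zpow_neg, show (2 * v : ℤ) = ((2 * v : ℕ) : ℤ) by push_cast; rfl, zpow_natCast, pow_mul]
    norm_num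
  rw [hpow, rchoose_natCast_add_half (Nat.sub_le v j), rchoose_natCast_sub_half hj,
    Nat.cast_choose ℝ (by omega : v ≤ 2 * v), Nat.cast_choose ℝ (by omega : 2 * j + 1 ≤ 2 * v + 1),
    Nat.sub_sub_self hj, show 2 * v - v = v by omega,
    show 2 * v + 1 - (2 * j + 1) = 2 * (v - j) by omega]
  obtain ⟨a, rfl⟩ := Nat.exists_eq_add_of_le hj
  rw [Nat.add_sub_cancel_left]
  field_simp
  ring
end

section
/- For all nonnegative integers $v$ and nonzero real $n$, $\sum_{j=0}^{v}\binom{v+1/2}{v-j}\binom{v-1/2}{j}\frac{1}{n^{2j+1}} = 2^{-2v-1}\binom{2v}{v}\left(\left(1+\frac{1}{n}\right)^{2v+1} - \left(1-\frac{1}{n}\right)^{2v+1}\right)$. -/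
/-!
Write `v = j + k`. By the recurrence `rchoose x (m + 1) * (m + 1) = rchoose x m * (x - m)`, moving
from `(j, k + 1)` to `(j + 1, k)` multiplies `rchoose (v + 1/2) k * rchoose (v - 1/2) j` by the same
factor as `choose (2v + 1) (2j + 1)`; at `j = 0` both sides are known from
`4 ^ k * rchoose (k + 1/2) k = centralBinom k * (2k + 1)`. Hence the `j`-th summand is
`4⁻¹ ^ v * centralBinom v * choose (2v + 1) (2j + 1) * (1/n) ^ (2j + 1)`, and the sum is the odd
part of the binomial expansion of `(1 + 1/n) ^ (2v + 1)`.
-/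

open Finset Nat

lemma rchoose_zero (x : ℝ) : rchoose x 0 = 1 := by simp [rchoose]

lemma rchoose_succ_mul (x : ℝ) (m : ℕ) :
    rchoose x (m + 1) * (m + 1) = rchoose x m * (x - m) := by
  simp only [rchoose, prod_range_succ, factorial_succ]
  push_cast
  field_simp

lemma rchoose_add_one_succ_mul (x : ℝ) (m : ℕ) :
    rchoose (x + 1) (m + 1) * (m + 1) = rchoose x m * (x + 1) := by
  simp only [rchoose, prod_range_succ', factorial_succ]
  push_cast
  simp only [add_sub_add_right_eq_sub, sub_zero]
  field_simp

lemma rchoose_add_half_self_mul_four_pow (k : ℕ) :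
    rchoose ((k : ℝ) + 1/2) k * 4 ^ k = centralBinom k * (2 * k + 1) := by
  induction k with
  | zero => simp [rchoose_zero]
  | succ k ih =>
    have hrec := rchoose_add_one_succ_mul ((k : ℝ) + 1/2) k
    have hcb : ((k + 1 : ℕ) : ℝ) * centralBinom (k + 1) = 2 * (2 * k + 1) * centralBinom k := by
      exact_mod_cast succ_mul_centralBinom_succ k
    have hk : (k : ℝ) + 1 ≠ 0 := by positivity
    apply mul_left_cancel₀ hk
    push_cast at hcb ⊢
    rw [show (k : ℝ) + 1 + 1/2 = (k + 1/2) + 1 by ring]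
    linear_combination 4 ^ (k + 1) * hrec - (2 * k + 3) * hcb + (4 * k + 6) * ih

lemma Nat.choose_add_two_mul (a b : ℕ) :
    (a + b + 2).choose (a + 2) * ((a + 1) * (a + 2)) =
      (a + b + 2).choose a * ((b + 1) * (b + 2)) := by
  have h₁ := choose_succ_right_eq (a + b + 2) (a + 1)
  have h₂ := choose_succ_right_eq (a + b + 2) a
  rw [show a + b + 2 - (a + 1) = b + 1 by omega] at h₁
  rw [show a + b + 2 - a = b + 2 by omega] at h₂
  calc (a + b + 2).choose (a + 2) * ((a + 1) * (a + 2))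
      = (a + b + 2).choose (a + 1 + 1) * (a + 1 + 1) * (a + 1) := by ring
    _ = (a + b + 2).choose (a + 1) * (a + 1) * (b + 1) := by rw [h₁]; ring
    _ = (a + b + 2).choose a * ((b + 1) * (b + 2)) := by rw [h₂]; ring

lemma rchoose_half_mul_rchoose_half_mul_four_pow (j k : ℕ) :
    rchoose ((j + k : ℕ) + 1/2) k * rchoose ((j + k : ℕ) - 1/2) j * 4 ^ (j + k) =
      centralBinom (j + k) * (2 * (j + k) + 1).choose (2 * j + 1) := by
  induction j generalizing k with
  | zero =>
    simpa [rchoose_zero] using rchoose_add_half_self_mul_four_pow k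
  | succ j ih =>
    rw [show j + 1 + k = j + (k + 1) by ring]
    specialize ih (k + 1)
    set v := j + (k + 1)
    have hv : (v : ℝ) = j + k + 1 := by simp only [v]; push_cast; ring
    have hA : rchoose ((v : ℝ) + 1/2) (k + 1) * (k + 1) =
        rchoose ((v : ℝ) + 1/2) k * (j + 3/2) := by
      rw [rchoose_succ_mul, hv]; ring
    have hB : rchoose ((v : ℝ) - 1/2) (j + 1) * (j + 1) =
        rchoose ((v : ℝ) - 1/2) j * (k + 1/2) := by
      rw [rchoose_succ_mul, hv]; ring
    have hbin : ((2 * v + 1).choose (2 * j + 3) : ℝ) * ((2 * j + 2) * (2 * j + 3)) =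
        (2 * v + 1).choose (2 * j + 1) * ((2 * k + 1) * (2 * k + 2)) := by
      have h := Nat.choose_add_two_mul (2 * j + 1) (2 * k)
      rw [show 2 * j + 1 + 2 * k + 2 = 2 * v + 1 by omega] at h
      exact_mod_cast h
    have hj : ((2 * j + 2) * (2 * j + 3) : ℝ) ≠ 0 := by positivity
    apply mul_left_cancel₀ hj
    rw [show 2 * (j + 1) + 1 = 2 * j + 3 by ring]
    linear_combination
      2 * (2 * j + 3) * rchoose ((v : ℝ) + 1/2) k * 4 ^ v * hB
      - (centralBinom v : ℝ) * hbin + (2 * k + 1) * (2 * k + 2) * ih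
      - 2 * (2 * k + 1) * rchoose ((v : ℝ) - 1/2) j * 4 ^ v * hA

lemma Finset.sum_range_two_mul {M : Type*} [AddCommMonoid M] (m : ℕ) (f : ℕ → M) :
    ∑ i ∈ range (2 * m), f i = ∑ j ∈ range m, (f (2 * j) + f (2 * j + 1)) := by
  induction m with
  | zero => simp
  | succ m ih =>
    rw [show 2 * (m + 1) = 2 * m + 1 + 1 by ring, sum_range_succ, sum_range_succ, ih,
      sum_range_succ, add_assoc]

lemma one_add_pow_sub_one_sub_pow {R : Type*} [CommRing R] (x : R) (m : ℕ) :
    (1 + x) ^ (2 * m + 1) - (1 - x) ^ (2 * m + 1) =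
      2 * ∑ j ∈ range (m + 1), x ^ (2 * j + 1) * (2 * m + 1).choose (2 * j + 1) := by
  rw [add_comm, sub_eq_add_neg 1, add_comm 1 (-x), add_pow, add_pow, ← sum_sub_distrib,
    show 2 * m + 1 + 1 = 2 * (m + 1) by ring, sum_range_two_mul, mul_sum]
  refine sum_congr rfl fun j _ => ?_
  simp only [one_pow, mul_one, pow_succ, pow_mul]
  ring

theorem binomial_sum_identity_general (v : ℕ) (n : ℝ) :
    ∑ j ∈ Finset.range (v + 1),
        rchoose ((v : ℝ) + 1/2) (v - j) * rchoose ((v : ℝ) - 1/2) j * (1 / n ^ (2 * j + 1)) =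
      2 ^ (-(2 * v : ℤ) - 1) * ((2 * v).choose v : ℝ) *
        ((1 + 1 / n) ^ (2 * v + 1) - (1 - 1 / n) ^ (2 * v + 1)) := by
  have hterm : ∀ j ∈ range (v + 1),
      rchoose ((v : ℝ) + 1/2) (v - j) * rchoose ((v : ℝ) - 1/2) j * (1 / n ^ (2 * j + 1)) =
        centralBinom v / 4 ^ v * ((1 / n) ^ (2 * j + 1) * (2 * v + 1).choose (2 * j + 1)) := by
    intro j hj
    obtain ⟨k, rfl⟩ := Nat.exists_eq_add_of_le (mem_range_succ_iff.mp hj)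
    have h := rchoose_half_mul_rchoose_half_mul_four_pow j k
    rw [Nat.add_sub_cancel_left, one_div_pow, div_mul_eq_mul_div, eq_div_iff (by positivity)]
    linear_combination (1 / n) ^ (2 * j + 1) * h
  have hpow : (2 : ℝ) ^ (-(2 * v : ℤ) - 1) = 1 / (2 * 4 ^ v) := by
    rw [show -(2 * v : ℤ) - 1 = -((2 * v + 1 : ℕ) : ℤ) by push_cast; ring, zpow_neg, zpow_natCast,
      pow_succ, pow_mul]
    norm_num [mul_comm]
  rw [sum_congr rfl hterm, ← mul_sum, one_add_pow_sub_one_sub_pow, hpow,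
    centralBinom_eq_two_mul_choose]
  field_simp

theorem binomial_sum_identity (v : ℕ) (n : ℝ) (hn : n ≠ 0) :
    ∑ j ∈ Finset.range (v + 1),
        rchoose ((v : ℝ) + 1/2) (v - j) * rchoose ((v : ℝ) - 1/2) j * (1 / n ^ (2 * j + 1)) =
      2 ^ (-(2 * v : ℤ) - 1) * ((2 * v).choose v : ℝ) *
        ((1 + 1 / n) ^ (2 * v + 1) - (1 - 1 / n) ^ (2 * v + 1)) :=
  binomial_sum_identity_general v n
end

section
/- Let $\ell \ge 5$ be a prime and let $n \ge 1$, $k$ be integers. Then $q_{(\ell-1)/2}(n,k) \equiv \left(\frac{(6k+1)^2-24n}{\ell}\right) \pmod{\ell}$, where $q_v(n,k) := 2^{-2v}\sum_{j=0}^{v}\binom{2v+1}{2j+1}\left((6k+1)^2-24n\right)^j (6k+1)^{2v-2j}$ (an integer for all $n,k$) and $\left(\frac{\cdot}{\ell}\right)$ is the Legendre symbol. -/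
/-!
Write `p = 2v + 1`. In characteristic `p` every binomial coefficient `C(p, 2j+1)` with
`2j + 1 < p` vanishes, so the sum collapses to its top term `a^v`, where
`a = (6k+1)² - 24n`. The prefactor `2^{-2v} = 2^{-(p-1)}` is `1` by Fermat's little theorem,
and `a^v = a^{(p-1)/2}` is the Legendre symbol by Euler's criterion.
-/

theorem sum_range_choose_odd_mul_pow_eq_pow {R : Type*} [Semiring R] {p v : ℕ} [CharP R p]
    (hp : p.Prime) (hpv : 2 * v + 1 = p) (a b : R) :
    ∑ j ∈ Finset.range (v + 1), ((2 * v + 1).choose (2 * j + 1) : R) * a ^ j * b ^ (2 * v - 2 * j)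
      = a ^ v := by
  subst hpv
  have hchoose : ∀ j ∈ Finset.range v, ((2 * v + 1).choose (2 * j + 1) : R) = 0 := by
    intro j hj
    rw [Finset.mem_range] at hj
    rw [CharP.cast_eq_zero_iff R (2 * v + 1)]
    exact hp.dvd_choose_self (by omega) (by omega)
  rw [Finset.sum_range_succ, Finset.sum_eq_zero fun j hj => by rw [hchoose j hj, zero_mul, zero_mul],
    zero_add, Nat.choose_self, Nat.sub_self, pow_zero, Nat.cast_one, one_mul, mul_one]

theorem qpoly_congr_legendre_general (ℓ : ℕ) [Fact (Nat.Prime ℓ)] (hℓ : 5 ≤ ℓ) (n k : ℤ) :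
    ((2 : ZMod ℓ)⁻¹) ^ (2 * ((ℓ - 1) / 2)) *
        ∑ j ∈ Finset.range ((ℓ - 1) / 2 + 1),
          ((2 * ((ℓ - 1) / 2) + 1).choose (2 * j + 1) : ZMod ℓ) *
            (((6 * k + 1) ^ 2 - 24 * n : ℤ) : ZMod ℓ) ^ j *
            ((6 * k + 1 : ℤ) : ZMod ℓ) ^ (2 * ((ℓ - 1) / 2) - 2 * j) =
      ((legendreSym ℓ ((6 * k + 1) ^ 2 - 24 * n) : ℤ) : ZMod ℓ) := by
  have hp : ℓ.Prime := Fact.out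
  obtain ⟨v, hv⟩ : Odd ℓ := hp.odd_of_ne_two (by omega)
  have hhalf : (ℓ - 1) / 2 = v := by omega
  have htwo : (2 : ZMod ℓ) ≠ 0 := by
    exact_mod_cast (ZMod.natCast_eq_zero_iff 2 ℓ).not.mpr fun h => by
      have := Nat.le_of_dvd two_pos h; omega
  have hfermat : (2 : ZMod ℓ)⁻¹ ^ (2 * v) = 1 := by
    rw [inv_pow, show 2 * v = ℓ - 1 by omega, ZMod.pow_card_sub_one_eq_one htwo, inv_one]
  rw [hhalf, sum_range_choose_odd_mul_pow_eq_pow hp hv.symm, hfermat, one_mul, legendreSym.eq_pow,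
    show ℓ / 2 = v by omega]

/-- For a prime `ℓ ≥ 5`, with `v = (ℓ-1)/2`, the quantity
`q_v(n,k) = 2^{-2v} ∑_{j=0}^{v} C(2v+1,2j+1) ((6k+1)²-24n)^j (6k+1)^{2v-2j}` is congruent
mod `ℓ` to the Legendre symbol `(((6k+1)²-24n)/ℓ)`.  We state the congruence in `ZMod ℓ`,
where `2` is invertible. -/
theorem qpoly_congr_legendre (ℓ : ℕ) [Fact (Nat.Prime ℓ)] (hℓ : 5 ≤ ℓ) (n k : ℤ) (hn : 1 ≤ n) :
    ((2 : ZMod ℓ)⁻¹) ^ (2 * ((ℓ - 1) / 2)) *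
        ∑ j ∈ Finset.range ((ℓ - 1) / 2 + 1),
          ((2 * ((ℓ - 1) / 2) + 1).choose (2 * j + 1) : ZMod ℓ) *
            (((6 * k + 1) ^ 2 - 24 * n : ℤ) : ZMod ℓ) ^ j *
            ((6 * k + 1 : ℤ) : ZMod ℓ) ^ (2 * ((ℓ - 1) / 2) - 2 * j) =
      ((legendreSym ℓ ((6 * k + 1) ^ 2 - 24 * n) : ℤ) : ZMod ℓ) :=
  qpoly_congr_legendre_general ℓ hℓ n k
end

section
/- For every $n \ge 0$, the coefficient of $q^n$ in $E_2(q)\,/\,\prod_{m\ge1}(1-q^m)$ equals $(1-24n)\,p(n)$, where $E_2(q) = 1 - 24\sum_{m\ge 1}\sigma_1(m) q^m$. -/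
open Finset Multiset

def addPartsEquiv (m d k : ℕ) (hd : 0 < d) :
    Nat.Partition m ≃ {l : Nat.Partition (m + d * k) // k ≤ Multiset.count d l.parts} where
  toFun μ := ⟨⟨Multiset.replicate k d + μ.parts,
      by intro x hx
         rcases Multiset.mem_add.mp hx with h | h
         · rw [Multiset.eq_of_mem_replicate h]; exact hd
         · exact μ.parts_pos h,
      by simp [Multiset.sum_replicate, μ.parts_sum, mul_comm, add_comm]⟩,
    by simp [Multiset.count_replicate]⟩
  invFun l := ⟨l.1.parts - Multiset.replicate k d,
      by intro x hx; exact l.1.parts_pos (Multiset.mem_of_le tsub_le_self hx),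
      by
        have hle : Multiset.replicate k d ≤ l.1.parts :=
          (Multiset.le_count_iff_replicate_le).mp l.2
        have h := congrArg Multiset.sum (tsub_add_cancel_of_le hle)
        rw [Multiset.sum_add, Multiset.sum_replicate, l.1.parts_sum, smul_eq_mul, Nat.mul_comm k d] at h
        omega⟩
  left_inv μ := by
    ext1
    simp
  right_inv l := by
    have hle : Multiset.replicate k d ≤ l.1.parts :=
      (Multiset.le_count_iff_replicate_le).mp l.2
    have : (l : Nat.Partition (m + d * k)).parts = Multiset.replicate k d + ((l : Nat.Partition (m + d * k)).parts - Multiset.replicate k d) := by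
      exact ((add_comm _ _).trans (tsub_add_cancel_of_le hle)).symm
    exact Subtype.ext (Nat.Partition.ext this.symm)

lemma card_ge (m d k : ℕ) (hd : 0 < d) :
    Fintype.card {l : Nat.Partition (m + d * k) // k ≤ Multiset.count d l.parts} = p m :=
  Fintype.card_congr (addPartsEquiv m d k hd).symm

lemma count_mul_le {n : ℕ} (l : Nat.Partition n) (d : ℕ) :
    Multiset.count d l.parts * d ≤ n := by
  have hle : Multiset.replicate (Multiset.count d l.parts) d ≤ l.parts :=
    (Multiset.le_count_iff_replicate_le).mp le_rfl
  obtain ⟨u, hu⟩ := Multiset.le_iff_exists_add.mp hle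
  have hs := l.parts_sum
  rw [hu, Multiset.sum_add, Multiset.sum_replicate, smul_eq_mul] at hs
  omega

lemma card_filter (n d k : ℕ) (hd : 0 < d) :
    (Finset.univ.filter (fun l : Nat.Partition n => k + 1 ≤ Multiset.count d l.parts)).card
      = if d * (k + 1) ≤ n then p (n - d * (k + 1)) else 0 := by
  split_ifs with h
  · obtain ⟨m, rfl⟩ : ∃ m, n = m + d * (k + 1) := ⟨n - d * (k + 1), by omega⟩
    rw [← Fintype.card_subtype, card_ge m d (k + 1) hd]
    congr 1
    omega
  · rw [Finset.card_eq_zero, Finset.filter_eq_empty_iff]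
    intro l _
    intro hcount
    have h2 := count_mul_le l d
    have : k + 1 ≤ Multiset.count d l.parts := hcount
    nlinarith

lemma multiset_sum_eq (N : ℕ) (s : Multiset ℕ) (h : ∀ x ∈ s, x < N) :
    s.sum = ∑ d ∈ Finset.range N, Multiset.count d s * d := by
  induction s using Multiset.induction_on with
  | empty => simp
  | cons a s ih =>
    have ha : a < N := h a (Multiset.mem_cons_self a s)
    rw [Multiset.sum_cons, ih (fun x hx => h x (Multiset.mem_cons_of_mem hx))]
    have hd : ∀ d ∈ Finset.range N, Multiset.count d (a ::ₘ s) * d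
        = Multiset.count d s * d + (if d = a then a else 0) := by
      intro d _
      rw [Multiset.count_cons]
      split_ifs with hda <;> simp [hda] <;> ring
    rw [Finset.sum_congr rfl hd, Finset.sum_add_distrib,
      Finset.sum_ite_eq' (Finset.range N) a, if_pos (Finset.mem_range.mpr ha)]
    ring

lemma sum_indicator (N c : ℕ) (h : c ≤ N) :
    ∑ k ∈ Finset.range N, (if k < c then 1 else 0) = c := by
  have h2 : (Finset.range N).filter (fun k => k < c) = Finset.range c := by
    ext x; simp only [Finset.mem_filter, Finset.mem_range]; omega
  rw [Finset.sum_ite, Finset.sum_const, Finset.sum_const]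
  simp [h2]

lemma key (n : ℕ) :
    ∑ m ∈ Finset.range (n + 1), (∑ d ∈ m.divisors, d) * p (n - m) = n * p n := by
  classical
  -- Step 1: n * p n = sum over partitions of sum of parts
  have h1 : n * p n = ∑ l : Nat.Partition n, l.parts.sum := by
    simp only [Nat.Partition.parts_sum, Finset.sum_const, Finset.card_univ, smul_eq_mul, p]
    ring
  -- Step 2: expand each parts.sum by value
  have h2 : ∀ l : Nat.Partition n,
      l.parts.sum = ∑ d ∈ Finset.range (n + 1), Multiset.count d l.parts * d := by
    intro l
    apply multiset_sum_eq
    intro x hx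
    have hx2 : x ≤ l.parts.sum := Multiset.single_le_sum (fun y _ => Nat.zero_le y) x hx
    rw [l.parts_sum] at hx2
    omega
  -- Step 3: per d, expand count via indicators and count partitions
  have h3 : ∀ d, ∑ l : Nat.Partition n, Multiset.count d l.parts * d
      = ∑ k ∈ Finset.range (n + 1),
          (if 0 < d ∧ d * (k + 1) ≤ n then d * p (n - d * (k + 1)) else 0) := by
    intro d
    rcases Nat.eq_zero_or_pos d with rfl | hd
    · simp
    have hc : ∀ l : Nat.Partition n, Multiset.count d l.parts * d
        = ∑ k ∈ Finset.range (n + 1), (if k < Multiset.count d l.parts then d else 0) := by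
      intro l
      have hle : Multiset.count d l.parts ≤ n + 1 := by
        have := count_mul_le l d
        nlinarith
      have : ∑ k ∈ Finset.range (n + 1), (if k < Multiset.count d l.parts then d else 0)
          = (∑ k ∈ Finset.range (n + 1), if k < Multiset.count d l.parts then 1 else 0) * d := by
        rw [Finset.sum_mul]
        exact Finset.sum_congr rfl fun k _ => by split_ifs <;> simp
      rw [this, sum_indicator _ _ (by
        have := count_mul_le l d
        nlinarith)]
    rw [Finset.sum_congr rfl fun l _ => hc l, Finset.sum_comm]
    refine Finset.sum_congr rfl fun k _ => ?_
    have : ∑ l : Nat.Partition n, (if k < Multiset.count d l.parts then d else 0)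
        = (Finset.univ.filter
            (fun l : Nat.Partition n => k + 1 ≤ Multiset.count d l.parts)).card * d := by
      rw [Finset.sum_ite, Finset.sum_const, Finset.sum_const]
      simp only [smul_eq_mul, mul_zero, add_zero]
      congr 1
    rw [this, card_filter n d k hd]
    simp only [hd, true_and]
    split_ifs with h
    · ring
    · ring
  -- Step 4: assemble into a sum over pairs
  have h4 : n * p n = ∑ q ∈ (Finset.range (n + 1) ×ˢ Finset.range (n + 1)).filter
      (fun q => 0 < q.1 ∧ q.1 * (q.2 + 1) ≤ n), q.1 * p (n - q.1 * (q.2 + 1)) := by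
    rw [h1, Finset.sum_congr rfl fun l _ => h2 l, Finset.sum_comm,
      Finset.sum_congr rfl fun d _ => h3 d, ← Finset.sum_product', Finset.sum_filter]
  -- Step 5: reindex to divisors
  have h5 : ∑ q ∈ (Finset.range (n + 1) ×ˢ Finset.range (n + 1)).filter
      (fun q => 0 < q.1 ∧ q.1 * (q.2 + 1) ≤ n), q.1 * p (n - q.1 * (q.2 + 1))
      = ∑ x ∈ (Finset.range (n + 1)).sigma (fun m => m.divisors), x.2 * p (n - x.1) := by
    refine Finset.sum_bij' (fun q _ => (⟨q.1 * (q.2 + 1), q.1⟩ : Σ _ : ℕ, ℕ))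
      (fun x _ => (x.2, x.1 / x.2 - 1)) ?_ ?_ ?_ ?_ ?_
    · intro q hq
      simp only [Finset.mem_filter, Finset.mem_product, Finset.mem_range] at hq
      simp only [Finset.mem_sigma, Finset.mem_range, Nat.mem_divisors]
      exact ⟨by omega, ⟨q.2 + 1, rfl⟩, Nat.mul_ne_zero (by omega) (by omega)⟩
    · intro x hx
      simp only [Finset.mem_sigma, Finset.mem_range, Nat.mem_divisors] at hx
      obtain ⟨hm, ⟨c, hc⟩, hm0⟩ := hx
      have hd0 : 0 < x.2 := by
        rcases Nat.eq_zero_or_pos x.2 with h | h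
        · simp [h] at hc; omega
        · exact h
      have hc0 : 0 < c := by
        rcases Nat.eq_zero_or_pos c with h | h
        · simp [h] at hc; omega
        · exact h
      have hdiv : x.1 / x.2 = c := by rw [hc]; exact Nat.mul_div_cancel_left c hd0
      have hcle : c ≤ x.1 := by rw [hc]; exact Nat.le_mul_of_pos_left c hd0
      have hdle : x.2 ≤ x.1 := by rw [hc]; exact Nat.le_mul_of_pos_right x.2 hc0
      have hkey : x.2 * (c - 1 + 1) = x.1 := by rw [hc]; congr 1; omega
      simp only [Finset.mem_filter, Finset.mem_product, Finset.mem_range, hdiv, hkey]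
      exact ⟨⟨by omega, by omega⟩, hd0, by omega⟩
    · intro q hq
      simp only [Finset.mem_filter, Finset.mem_product, Finset.mem_range] at hq
      have : q.1 * (q.2 + 1) / q.1 = q.2 + 1 := Nat.mul_div_cancel_left _ hq.2.1
      simp [this]
    · intro x hx
      simp only [Finset.mem_sigma, Finset.mem_range, Nat.mem_divisors] at hx
      obtain ⟨hm, ⟨c, hc⟩, hm0⟩ := hx
      have hd0 : 0 < x.2 := by
        rcases Nat.eq_zero_or_pos x.2 with h | h
        · simp [h] at hc; omega
        · exact h
      have hc0 : 0 < c := by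
        rcases Nat.eq_zero_or_pos c with h | h
        · simp [h] at hc; omega
        · exact h
      have hdiv : x.1 / x.2 = c := by rw [hc]; exact Nat.mul_div_cancel_left c hd0
      have : x.2 * (x.1 / x.2 - 1 + 1) = x.1 := by rw [hdiv, hc]; congr 1; omega
      simp only [this]
    · intro q hq
      rfl
  rw [h4, h5, Finset.sum_sigma]
  exact Finset.sum_congr rfl fun m _ => by rw [Finset.sum_mul]

/-- The coefficients of the weight-2 Eisenstein series `E₂ = 1 - 24 ∑_{m≥1} σ₁(m) q^m`. -/
def e2 (m : ℕ) : ℤ := if m = 0 then 1 else -24 * (∑ d ∈ m.divisors, d : ℕ)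

/-- The `n`-th coefficient of `E₂(q) · ∑_{m≥0} p(m) q^m` equals `(1 - 24n) p(n)`. -/
theorem e2_div_eta_coeff (n : ℕ) :
    ∑ i ∈ Finset.range (n + 1), e2 i * (p (n - i) : ℤ) = (1 - 24 * (n : ℤ)) * p n := by
  have hcast : ∑ m ∈ Finset.range (n + 1), ((∑ d ∈ m.divisors, d : ℕ) : ℤ) * (p (n - m) : ℤ)
      = (n : ℤ) * (p n : ℤ) := by
    exact_mod_cast congrArg (Nat.cast : ℕ → ℤ) (key n)
  have he : ∀ i ∈ Finset.range (n + 1), e2 i * (p (n - i) : ℤ)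
      = (if i = 0 then (p (n - i) : ℤ) else 0)
        + (-24) * (((∑ d ∈ i.divisors, d : ℕ) : ℤ) * (p (n - i) : ℤ)) := by
    intro i _
    rcases eq_or_ne i 0 with rfl | h
    · simp [e2]
    · simp only [e2, if_neg h]
      ring
  rw [Finset.sum_congr rfl he, Finset.sum_add_distrib,
    Finset.sum_ite_eq' (Finset.range (n + 1)) 0 (fun i => (p (n - i) : ℤ)),
    if_pos (Finset.mem_range.mpr (by omega)), ← Finset.mul_sum, hcast]
  simp only [Nat.sub_zero]
  ring
end

section
/- Let $n \ge 5$ be an integer coprime to $6$ (so $24 \mid n^2-1$). Choose $M_n \in \{1,\dots,6\}$ with $M_n \equiv (n+1)/2 \pmod{6}$ if $n \not\equiv 7 \pmod{12}$, and $M_n = 2$ if $n \equiv 7 \pmod{12}$. Then $\frac{n+1}{2M_n}$ and $\frac{(n-1)M_n}{12}$ are positive integers which are coprime, and their product is $\frac{n^2-1}{24}$. -/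
lemma factorization_aux (n M a b : ℤ) (hM : 0 < M)
    (h1 : n + 1 = 2 * M * a) (h2 : (n - 1) * M = 12 * b)
    (ha : 0 < a) (hb : 0 < b) (hco : IsCoprime a b) :
    2 * M ∣ n + 1 ∧ (12 : ℤ) ∣ (n - 1) * M ∧
      0 < (n + 1) / (2 * M) ∧ 0 < (n - 1) * M / 12 ∧
      Int.gcd ((n + 1) / (2 * M)) ((n - 1) * M / 12) = 1 ∧
      (n + 1) / (2 * M) * ((n - 1) * M / 12) = (n ^ 2 - 1) / 24 := by
  have e1 : (n + 1) / (2 * M) = a := by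
    rw [h1]; exact Int.mul_ediv_cancel_left _ (by positivity)
  have e2 : (n - 1) * M / 12 = b := by
    rw [h2]; exact Int.mul_ediv_cancel_left _ (by norm_num)
  have e3 : n ^ 2 - 1 = 24 * (a * b) := by
    have h : (n ^ 2 - 1) * M = 24 * (a * b) * M := by
      linear_combination ((n - 1) * M) * h1 + (2 * M * a) * h2
    exact mul_right_cancel₀ (ne_of_gt hM) h
  refine ⟨⟨a, h1⟩, ⟨b, h2⟩, ?_, ?_, ?_, ?_⟩
  · rw [e1]; exact ha
  · rw [e2]; exact hb
  · rw [e1, e2]; exact Int.isCoprime_iff_gcd_eq_one.mp hco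
  · rw [e1, e2, e3, Int.mul_ediv_cancel_left _ (by norm_num : (24:ℤ) ≠ 0)]

/-- Factorization lemma: for `n ≥ 5` coprime to `6`, and `M ∈ {1,…,6}` with `M = 2` if
`n ≡ 7 (mod 12)` and `M ≡ (n+1)/2 (mod 6)` otherwise, the numbers `(n+1)/(2M)` and
`(n-1)M/12` are coprime positive integers whose product is `(n²-1)/24`. -/
theorem factorization_lemma (n M : ℤ) (hn : 5 ≤ n) (hcop : Int.gcd n 6 = 1)
    (hM1 : 1 ≤ M) (hM6 : M ≤ 6)
    (hM7 : n % 12 = 7 → M = 2)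
    (hMc : n % 12 ≠ 7 → M ≡ (n + 1) / 2 [ZMOD 6]) :
    2 * M ∣ n + 1 ∧ (12 : ℤ) ∣ (n - 1) * M ∧
      0 < (n + 1) / (2 * M) ∧ 0 < (n - 1) * M / 12 ∧
      Int.gcd ((n + 1) / (2 * M)) ((n - 1) * M / 12) = 1 ∧
      (n + 1) / (2 * M) * ((n - 1) * M / 12) = (n ^ 2 - 1) / 24 := by
  have h2 : ¬ (2 : ℤ) ∣ n := by
    intro h
    have : (2 : ℤ) ∣ (Int.gcd n 6 : ℤ) := Int.dvd_coe_gcd h (by norm_num)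
    rw [hcop] at this; norm_num at this
  have h3 : ¬ (3 : ℤ) ∣ n := by
    intro h
    have : (3 : ℤ) ∣ (Int.gcd n 6 : ℤ) := Int.dvd_coe_gcd h (by norm_num)
    rw [hcop] at this; norm_num at this
  have hr : n % 12 = 1 ∨ n % 12 = 5 ∨ n % 12 = 7 ∨ n % 12 = 11 := by omega
  set k := n / 12 with hk
  have hnk : n = 12 * k + n % 12 := by omega
  rcases hr with hr | hr | hr | hr
  · have hM : M = 1 := by
      have := hMc (by omega)
      unfold Int.ModEq at this
      omega
    subst hM
    exact factorization_aux n 1 (6 * k + 1) k (by norm_num)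
      (by omega) (by omega) (by omega) (by omega) ⟨1, -6, by ring⟩
  · have hM : M = 3 := by
      have := hMc (by omega)
      unfold Int.ModEq at this
      omega
    subst hM
    exact factorization_aux n 3 (2 * k + 1) (3 * k + 1) (by norm_num)
      (by omega) (by omega) (by omega) (by omega) ⟨3, -2, by ring⟩
  · have hM : M = 2 := hM7 hr
    subst hM
    exact factorization_aux n 2 (3 * k + 2) (2 * k + 1) (by norm_num)
      (by omega) (by omega) (by omega) (by omega) ⟨2, -3, by ring⟩
  · have hM : M = 6 := by
      have := hMc (by omega)
      unfold Int.ModEq at this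
      omega
    subst hM
    exact factorization_aux n 6 (k + 1) (6 * k + 5) (by norm_num)
      (by omega) (by omega) (by omega) (by omega) ⟨6, -1, by ring⟩
end
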